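/- arXiv:1404.2824 — 2 statements merged into one kernel-verified Lean document; each statement's English description precedes it below -/
import Mathlib

section
/- The generating function of the numbers pnw(n,5) satisfies the formal power series identity (1 − x⁴)·(1 − x²)²·(1 − x)² · ∑_{n≥1} pnw(n,5)·xⁿ = x⁵·(1 + x + x²) (in the ring of formal power series over the integers). -/
/-!
A prefix normal word with `d ≥ 1` ones starts with a one, so it is `1 0^{g₀} 1 0^{g₁} ⋯ 1 0^{g_{d-1}}`
for a gap tuple `g`. Prefix normality says that the prefix count of ones `c` is subadditive, and
since the ones sit at the increasing positions `p j = j + g₀ + ⋯ + g_{j-1}` this amounts to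
`p (j - i) + p i ≤ p j` for `i ≤ j < d`, i.e. to linear inequalities between partial sums of gaps.
For `d = 5` these read `a ≤ b, a ≤ c, a ≤ d, a + b ≤ c + d` for `g = (a, b, c, d, e)`.

The gap tuples are then counted by generating functions: translating a set of tuples by a vector
`v` splits it into the tuples that are not `≥ v` and a shifted copy, weighted by `X ^ |v|`.
A handful of such translations peel the cone of admissible gaps down to single points.
-/

/-- A binary word (list of Booleans, `true` = 1) is prefix normal if no substring
has more 1s than the prefix of the same length. -/
def IsPrefixNormal (w : List Bool) : Prop :=
  ∀ u : List Bool, u <:+: w → u.count true ≤ (w.take u.length).count true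

/-- The number of prefix normal words of length `n` and density `d` (number of 1s). -/
noncomputable def pnwd (n d : ℕ) : ℕ :=
  Nat.card {w : List Bool // w.length = n ∧ w.count true = d ∧ IsPrefixNormal w}

open Finset PowerSeries

section MonotoneCount

variable {p : ℕ → ℕ} {d : ℕ}

lemma lt_card_filter_lt_iff (hp : Monotone p) {j L : ℕ} (hj : j < d) :
    j < #{i ∈ range d | p i < L} ↔ p j < L := by
  constructor
  · intro h
    by_contra! hL
    have hsub : {i ∈ range d | p i < L} ⊆ range j := fun i hi => by
      rw [mem_filter] at hi
      exact mem_range.2 (lt_of_not_ge fun hji => (hL.trans (hp hji)).not_gt hi.2)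
    have := card_le_card hsub
    rw [card_range] at this
    omega
  · intro h
    have hsub : range (j + 1) ⊆ {i ∈ range d | p i < L} := fun i hi => by
      rw [mem_range] at hi
      exact mem_filter.2 ⟨mem_range.2 (by omega), (hp (by omega)).trans_lt h⟩
    simpa using card_le_card hsub

lemma card_filter_lt_add_le_iff (hp : Monotone p) :
    (∀ s L, #{j ∈ range d | p j < s + L} ≤ #{j ∈ range d | p j < s} + #{j ∈ range d | p j < L}) ↔
      ∀ i j, i ≤ j → j < d → p (j - i) + p i ≤ p j := by
  constructor
  · -- test subadditivity on the window from the `i`-th to the `j`-th one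
    intro h i j hij hjd
    have hpij := hp hij
    have hj := (lt_card_filter_lt_iff hp hjd (L := p j + 1)).2 (Nat.lt_succ_self _)
    have hi := (lt_card_filter_lt_iff hp (hij.trans_lt hjd) (L := p i)).not.2 (lt_irrefl _)
    have hsub := h (p i) (p j - p i + 1)
    rw [show p i + (p j - p i + 1) = p j + 1 by omega] at hsub
    have hji := (lt_card_filter_lt_iff hp (L := p j - p i + 1) (by omega : j - i < d)).1 (by omega)
    omega
  · -- otherwise the ones `i, …, i + k` lie in `[s, s + L)`, so the `k`-th one precedes `L`
    intro h s L
    by_contra! hlt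
    set i := #{j ∈ range d | p j < s}
    set k := #{j ∈ range d | p j < L}
    have hjd : i + k < d := hlt.trans_le ((card_filter_le _ _).trans (card_range d).le)
    have hj := (lt_card_filter_lt_iff hp hjd).1 hlt
    have hi := (lt_card_filter_lt_iff hp (by omega : i < d) (L := s)).not.1 (lt_irrefl _)
    have hk := (lt_card_filter_lt_iff hp (by omega : k < d) (L := L)).not.1 (lt_irrefl _)
    have := h i (i + k) (by omega) hjd
    rw [Nat.add_sub_cancel_left] at this
    omega

end MonotoneCount

lemma isPrefixNormal_iff_count_take_add_le (w : List Bool) :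
    IsPrefixNormal w ↔ ∀ s L,
      (w.take (s + L)).count true ≤ (w.take s).count true + (w.take L).count true := by
  constructor
  · intro hw s L
    have hinf : (w.drop s).take L <:+: w :=
      (List.take_prefix L _).isInfix.trans (List.drop_suffix s w).isInfix
    have hmono : (w.take ((w.drop s).take L).length).count true ≤ (w.take L).count true :=
      (List.take_sublist_take_left (List.length_take_le _ _)).count_le _
    rw [List.take_add, List.count_append]
    exact Nat.add_le_add_left ((hw _ hinf).trans hmono) _
  · rintro h u ⟨s, t, rfl⟩
    have := h s.length u.length
    rw [List.append_assoc] at this ⊢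
    simp only [List.take_length_add_append, List.take_left, List.count_append] at this
    omega

def wordOfGaps : List ℕ → List Bool
  | [] => []
  | g :: gs => true :: (List.replicate g false ++ wordOfGaps gs)

lemma length_wordOfGaps (gs : List ℕ) : (wordOfGaps gs).length = gs.length + gs.sum := by
  induction gs with
  | nil => rfl
  | cons g gs ih => simp [wordOfGaps, ih]; omega

lemma count_true_wordOfGaps (gs : List ℕ) : (wordOfGaps gs).count true = gs.length := by
  induction gs with
  | nil => rfl
  | cons g gs ih => simp [wordOfGaps, List.count_replicate, ih]

def onePos (gs : List ℕ) (j : ℕ) : ℕ := j + (gs.take j).sum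

@[simp] lemma onePos_zero (gs : List ℕ) : onePos gs 0 = 0 := by simp [onePos]

@[simp] lemma onePos_cons_succ (g : ℕ) (gs : List ℕ) (j : ℕ) :
    onePos (g :: gs) (j + 1) = onePos gs j + g + 1 := by
  simp [onePos]; omega

lemma monotone_onePos (gs : List ℕ) : Monotone (onePos gs) := fun _ _ hij =>
  Nat.add_le_add hij (List.Sublist.sum_le_sum (List.take_sublist_take_left hij) (by simp))

lemma count_take_replicate_false_append (k L : ℕ) (v : List Bool) :
    ((List.replicate k false ++ v).take L).count true = (v.take (L - k)).count true := by
  simp [List.take_append, List.take_replicate, List.count_append, List.count_replicate]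

lemma count_take_wordOfGaps (gs : List ℕ) (L : ℕ) :
    ((wordOfGaps gs).take L).count true = #{j ∈ range gs.length | onePos gs j < L} := by
  induction gs generalizing L with
  | nil => simp [wordOfGaps]
  | cons g gs ih =>
    rw [card_filter, List.length_cons, sum_range_succ']
    cases L with
    | zero => simp
    | succ L =>
      rw [wordOfGaps, List.take_succ_cons, List.count_cons_self,
        count_take_replicate_false_append, ih, card_filter]
      simp only [onePos_cons_succ, onePos_zero, Nat.zero_lt_succ, if_true]
      congr 1
      exact sum_congr rfl fun j _ => if_congr (by omega) rfl rfl

lemma isPrefixNormal_wordOfGaps_iff (gs : List ℕ) :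
    IsPrefixNormal (wordOfGaps gs) ↔
      ∀ i j, i ≤ j → j < gs.length → (gs.take (j - i)).sum + (gs.take i).sum ≤ (gs.take j).sum := by
  simp_rw [isPrefixNormal_iff_count_take_add_le, count_take_wordOfGaps,
    card_filter_lt_add_le_iff (monotone_onePos gs), onePos]
  refine forall₂_congr fun i j => imp_congr_right fun hij => imp_congr_right fun _ => ?_
  omega

lemma isPrefixNormal_wordOfGaps_five (a b c d e : ℕ) :
    IsPrefixNormal (wordOfGaps [a, b, c, d, e]) ↔ a ≤ b ∧ a ≤ c ∧ a ≤ d ∧ a + b ≤ c + d := by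
  rw [isPrefixNormal_wordOfGaps_iff]
  constructor
  · intro h
    have hab := h 1 2 (by omega) (by simp)
    have hac := h 2 3 (by omega) (by simp)
    have had := h 3 4 (by omega) (by simp)
    have habcd := h 2 4 (by omega) (by simp)
    simp only [Nat.add_one_sub_one, Nat.reduceSub, List.take_succ_cons, List.take_zero,
      List.sum_cons, List.sum_nil, add_zero, add_le_add_iff_left] at hab hac had habcd
    omega
  · intro h i j hij hj
    simp only [List.length_cons, List.length_nil] at hj
    interval_cases j <;> interval_cases i <;> simp <;> omega

lemma replicate_false_append_wordOfGaps_inj {a a' : ℕ} {gs gs' : List ℕ}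
    (h : List.replicate a false ++ wordOfGaps gs = List.replicate a' false ++ wordOfGaps gs') :
    a = a' ∧ wordOfGaps gs = wordOfGaps gs' := by
  induction a generalizing a' with
  | zero =>
    cases a' with
    | zero => exact ⟨rfl, h⟩
    | succ a' => cases gs <;> simp [wordOfGaps, List.replicate_succ] at h
  | succ a ih =>
    cases a' with
    | zero => cases gs' <;> simp [wordOfGaps, List.replicate_succ] at h
    | succ a' =>
      simp only [List.replicate_succ, List.cons_append, List.cons.injEq, true_and] at h
      exact (ih h).imp_left (congrArg _)

lemma wordOfGaps_injective : Function.Injective wordOfGaps := by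
  intro gs gs' h
  induction gs generalizing gs' with
  | nil => cases gs' <;> simp_all [wordOfGaps]
  | cons g gs ih =>
    cases gs' with
    | nil => simp [wordOfGaps] at h
    | cons g' gs' =>
      simp only [wordOfGaps, List.cons.injEq, true_and] at h
      obtain ⟨rfl, h'⟩ := replicate_false_append_wordOfGaps_inj h
      rw [ih h']

lemma exists_eq_replicate_false_append_wordOfGaps (w : List Bool) :
    ∃ k gs, w = List.replicate k false ++ wordOfGaps gs := by
  induction w with
  | nil => exact ⟨0, [], rfl⟩
  | cons b w ih =>
    obtain ⟨k, gs, rfl⟩ := ih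
    cases b
    · exact ⟨k + 1, gs, rfl⟩
    · exact ⟨0, k :: gs, rfl⟩

lemma IsPrefixNormal.exists_eq_wordOfGaps {w : List Bool} (hw : IsPrefixNormal w)
    (h : 0 < w.count true) : ∃ gs, w = wordOfGaps gs := by
  obtain ⟨k, gs, rfl⟩ := exists_eq_replicate_false_append_wordOfGaps w
  cases k with
  | zero => exact ⟨gs, rfl⟩
  | succ k =>
    have := hw [true] ((List.singleton_infix_iff _ _).2 (List.count_pos_iff.1 h))
    simp [List.replicate_succ] at this

section TupleCount

variable {ι : Type*} [Fintype ι]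

noncomputable def tupleCount (P : (ι → ℕ) → Prop) (m : ℕ) : ℕ :=
  {x : ι → ℕ | ∑ i, x i = m ∧ P x}.ncard

noncomputable def tupleSeries (P : (ι → ℕ) → Prop) : PowerSeries ℤ :=
  mk fun m => (tupleCount P m : ℤ)

lemma finite_setOf_sum_eq (P : (ι → ℕ) → Prop) (m : ℕ) :
    {x : ι → ℕ | ∑ i, x i = m ∧ P x}.Finite := by
  refine (Set.Finite.pi (t := fun _ => Set.Iic m) fun _ => Set.finite_Iic m).subset ?_
  rintro x ⟨rfl, -⟩ i -
  exact single_le_sum (fun j _ => Nat.zero_le (x j)) (mem_univ i)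

lemma tupleCount_eq_add (P : (ι → ℕ) → Prop) (v : ι → ℕ) (m : ℕ) :
    tupleCount P m = tupleCount (fun x => P x ∧ ¬ v ≤ x) m +
      if ∑ i, v i ≤ m then tupleCount (fun y => P (y + v)) (m - ∑ i, v i) else 0 := by
  have hsplit : {x : ι → ℕ | ∑ i, x i = m ∧ P x} =
      {x | ∑ i, x i = m ∧ P x ∧ ¬ v ≤ x} ∪ {x | ∑ i, x i = m ∧ P x ∧ v ≤ x} := by
    ext x; by_cases h : v ≤ x <;> simp [h]
  have hdisj : Disjoint {x : ι → ℕ | ∑ i, x i = m ∧ P x ∧ ¬ v ≤ x}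
      {x | ∑ i, x i = m ∧ P x ∧ v ≤ x} :=
    Set.disjoint_left.2 fun x hx hx' => hx.2.2 hx'.2.2
  have hsum (y : ι → ℕ) : ∑ i, (y + v) i = ∑ i, y i + ∑ i, v i := sum_add_distrib
  have hshift : {x : ι → ℕ | ∑ i, x i = m ∧ P x ∧ v ≤ x}.ncard =
      if ∑ i, v i ≤ m then tupleCount (fun y => P (y + v)) (m - ∑ i, v i) else 0 := by
    split_ifs with hv
    · rw [tupleCount, ← Set.ncard_image_of_injective {y | ∑ i, y i = m - ∑ i, v i ∧ P (y + v)}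
        (add_left_injective v)]
      congr 1
      ext x
      constructor
      · rintro ⟨hx, hP, hvx⟩
        obtain ⟨y, rfl⟩ : ∃ y, x = y + v := ⟨x - v, (tsub_add_cancel_of_le hvx).symm⟩
        exact ⟨y, ⟨by rw [hsum] at hx; omega, hP⟩, rfl⟩
      · rintro ⟨y, ⟨hy, hP⟩, rfl⟩
        exact ⟨by rw [hsum]; omega, hP, le_add_self⟩
    · refine (Set.ncard_eq_zero (finite_setOf_sum_eq _ m)).2 (Set.eq_empty_of_forall_notMem ?_)
      rintro x ⟨hx, -, hvx⟩
      obtain ⟨y, rfl⟩ : ∃ y, x = y + v := ⟨x - v, (tsub_add_cancel_of_le hvx).symm⟩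
      rw [hsum] at hx
      omega
  rw [tupleCount, hsplit, Set.ncard_union_eq hdisj (finite_setOf_sum_eq _ m)
    (finite_setOf_sum_eq _ m), hshift]
  rfl

lemma tupleSeries_eq_add_X_pow_mul {P Q R : (ι → ℕ) → Prop} (v : ι → ℕ) {k : ℕ}
    (hk : ∑ i, v i = k) (hQ : ∀ x, P x ∧ ¬ v ≤ x ↔ Q x) (hR : ∀ y, P (y + v) ↔ R y) :
    tupleSeries P = tupleSeries Q + X ^ k * tupleSeries R := by
  have hQ' : (fun x => P x ∧ ¬ v ≤ x) = Q := funext fun x => propext (hQ x)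
  have hR' : (fun y => P (y + v)) = R := funext fun y => propext (hR y)
  ext m
  rw [map_add, coeff_X_pow_mul', tupleSeries, tupleSeries, tupleSeries, coeff_mk, coeff_mk,
    tupleCount_eq_add P v m, hQ', hR', hk]
  split_ifs <;> simp

lemma one_sub_X_pow_mul_tupleSeries {P Q : (ι → ℕ) → Prop} (v : ι → ℕ) {k : ℕ}
    (hk : ∑ i, v i = k) (hQ : ∀ x, P x ∧ ¬ v ≤ x ↔ Q x) (hP : ∀ y, P (y + v) ↔ P y) :
    (1 - X ^ k) * tupleSeries P = tupleSeries Q := by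
  rw [sub_mul, one_mul, sub_eq_iff_eq_add]
  exact tupleSeries_eq_add_X_pow_mul v hk hQ hP

lemma tupleSeries_eq_one {P : (ι → ℕ) → Prop} (hP : ∀ x, P x ↔ x = 0) :
    tupleSeries P = 1 := by
  ext m
  have hset : {x : ι → ℕ | ∑ i, x i = m ∧ P x} = if m = 0 then {0} else ∅ := by
    ext x
    split_ifs with hm <;> simp only [hP, Set.mem_ofPred_eq, Set.mem_singleton_iff]
    · exact ⟨And.right, fun hx => ⟨by simp [hx, hm], hx⟩⟩
    · exact ⟨fun ⟨hx, h0⟩ => hm (by simp [← hx, h0]), False.elim⟩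
  rw [tupleSeries, coeff_mk, tupleCount, hset, coeff_one]
  split_ifs <;> simp

end TupleCount

lemma pnwd_add_eq_tupleCount {d : ℕ} (hd : 0 < d) (m : ℕ) :
    pnwd (m + d) d =
      tupleCount (fun g : Fin d → ℕ => IsPrefixNormal (wordOfGaps (List.ofFn g))) m := by
  rw [tupleCount, ← Nat.card_coe_set_eq, pnwd]
  symm
  refine Nat.card_eq_of_bijective (fun g => ⟨wordOfGaps (List.ofFn g.1), ?_, ?_, g.2.2⟩) ⟨?_, ?_⟩
  · rw [length_wordOfGaps, List.length_ofFn, List.sum_ofFn, g.2.1, add_comm]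
  · rw [count_true_wordOfGaps, List.length_ofFn]
  · intro g g' h
    exact Subtype.ext (List.ofFn_injective (wordOfGaps_injective (congrArg Subtype.val h)))
  · rintro ⟨w, hlen, hcount, hw⟩
    obtain ⟨gs, rfl⟩ := hw.exists_eq_wordOfGaps (hcount ▸ hd)
    rw [count_true_wordOfGaps] at hcount
    subst hcount
    refine ⟨⟨fun i => gs[(i : ℕ)], ?_, ?_⟩, Subtype.ext ?_⟩
    · rw [length_wordOfGaps] at hlen
      rw [← List.sum_ofFn, List.ofFn_getElem]
      omega
    · simpa [List.ofFn_getElem] using hw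
    · simp [List.ofFn_getElem]

lemma pnwd_eq_zero_of_lt {n d : ℕ} (h : n < d) : pnwd n d = 0 := by
  rw [pnwd, Nat.card_eq_zero]
  left
  exact ⟨fun ⟨w, hlen, hcount, _⟩ => by
    have := List.count_le_length (a := true) (l := w)
    omega⟩

def gapCondFive (x : Fin 5 → ℕ) : Prop :=
  x 0 ≤ x 1 ∧ x 0 ≤ x 2 ∧ x 0 ≤ x 3 ∧ x 0 + x 1 ≤ x 2 + x 3

lemma pnwd_five_eq_tupleCount (m : ℕ) : pnwd (m + 5) 5 = tupleCount gapCondFive m := by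
  rw [pnwd_add_eq_tupleCount (by norm_num)]
  congr
  funext x
  simp only [List.ofFn_succ, List.ofFn_zero, isPrefixNormal_wordOfGaps_five, gapCondFive]
  rfl

lemma one_sub_mul_tupleSeries_gapCondFive :
    (1 - X ^ 4) * (1 - X ^ 2) ^ 2 * (1 - X) ^ 2 * tupleSeries gapCondFive = 1 + X + X ^ 2 := by
  have e1 : (1 - X ^ 4) * tupleSeries gapCondFive =
      tupleSeries fun x : Fin 5 → ℕ => x 0 = 0 ∧ x 1 ≤ x 2 + x 3 :=
    one_sub_X_pow_mul_tupleSeries ![1, 1, 1, 1, 0] (by simp [Fin.sum_univ_succ])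
      (fun x => by simp [gapCondFive, Pi.le_def, Fin.forall_fin_succ]; omega)
      (fun x => by simp [gapCondFive]; omega)
  have e2 : (1 - X ^ 1) * (tupleSeries fun x : Fin 5 → ℕ => x 0 = 0 ∧ x 1 ≤ x 2 + x 3) =
      tupleSeries fun x : Fin 5 → ℕ => x 0 = 0 ∧ x 1 ≤ x 2 + x 3 ∧ x 4 = 0 :=
    one_sub_X_pow_mul_tupleSeries ![0, 0, 0, 0, 1] (by simp [Fin.sum_univ_succ])
      (fun x => by simp [Pi.le_def, Fin.forall_fin_succ]; omega)
      (fun x => by simp)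
  have e3 : (1 - X ^ 2) * (tupleSeries fun x : Fin 5 → ℕ => x 0 = 0 ∧ x 1 ≤ x 2 + x 3 ∧ x 4 = 0) =
      tupleSeries fun x : Fin 5 → ℕ => x 0 = 0 ∧ x 1 ≤ x 2 + x 3 ∧ x 4 = 0 ∧ (x 1 = 0 ∨ x 2 = 0) :=
    one_sub_X_pow_mul_tupleSeries ![0, 1, 1, 0, 0] (by simp [Fin.sum_univ_succ])
      (fun x => by simp [Pi.le_def, Fin.forall_fin_succ]; omega)
      (fun x => by simp; omega)
  have e4 : (tupleSeries fun x : Fin 5 → ℕ => x 0 = 0 ∧ x 1 ≤ x 2 + x 3 ∧ x 4 = 0 ∧ (x 1 = 0 ∨ x 2 = 0)) =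
      (tupleSeries fun x : Fin 5 → ℕ => x 0 = 0 ∧ x 1 = 0 ∧ x 4 = 0) +
        X ^ 2 * tupleSeries fun x : Fin 5 → ℕ => x 0 = 0 ∧ x 2 = 0 ∧ x 4 = 0 ∧ x 1 ≤ x 3 :=
    tupleSeries_eq_add_X_pow_mul ![0, 1, 0, 1, 0] (by simp [Fin.sum_univ_succ])
      (fun x => by simp [Pi.le_def, Fin.forall_fin_succ]; omega)
      (fun x => by simp; omega)
  have e5 : (1 - X ^ 2) * (tupleSeries fun x : Fin 5 → ℕ => x 0 = 0 ∧ x 2 = 0 ∧ x 4 = 0 ∧ x 1 ≤ x 3) =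
      tupleSeries fun x : Fin 5 → ℕ => x 0 = 0 ∧ x 1 = 0 ∧ x 2 = 0 ∧ x 4 = 0 :=
    one_sub_X_pow_mul_tupleSeries ![0, 1, 0, 1, 0] (by simp [Fin.sum_univ_succ])
      (fun x => by simp [Pi.le_def, Fin.forall_fin_succ]; omega)
      (fun x => by simp)
  have e6 : (1 - X ^ 1) * (tupleSeries fun x : Fin 5 → ℕ => x 0 = 0 ∧ x 1 = 0 ∧ x 4 = 0) =
      tupleSeries fun x : Fin 5 → ℕ => x 0 = 0 ∧ x 1 = 0 ∧ x 3 = 0 ∧ x 4 = 0 :=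
    one_sub_X_pow_mul_tupleSeries ![0, 0, 0, 1, 0] (by simp [Fin.sum_univ_succ])
      (fun x => by simp [Pi.le_def, Fin.forall_fin_succ]; omega)
      (fun x => by simp)
  have e7 : (1 - X ^ 1) * (tupleSeries fun x : Fin 5 → ℕ => x 0 = 0 ∧ x 1 = 0 ∧ x 2 = 0 ∧ x 4 = 0) = 1 :=
    (one_sub_X_pow_mul_tupleSeries ![0, 0, 0, 1, 0] (by simp [Fin.sum_univ_succ])
      (fun x => Iff.rfl) (fun x => by simp)).trans
      (tupleSeries_eq_one fun x => by simp [Pi.le_def, Fin.forall_fin_succ, funext_iff]; omega)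
  have e8 : (1 - X ^ 1) * (tupleSeries fun x : Fin 5 → ℕ => x 0 = 0 ∧ x 1 = 0 ∧ x 3 = 0 ∧ x 4 = 0) = 1 :=
    (one_sub_X_pow_mul_tupleSeries ![0, 0, 1, 0, 0] (by simp [Fin.sum_univ_succ])
      (fun x => Iff.rfl) (fun x => by simp)).trans
      (tupleSeries_eq_one fun x => by simp [Pi.le_def, Fin.forall_fin_succ, funext_iff]; omega)
  linear_combination ((1 - X ^ 2) ^ 2 * (1 - X) ^ 2) * e1 + ((1 - X ^ 2) ^ 2 * (1 - X)) * e2 +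
    ((1 - X ^ 2) * (1 - X)) * e3 + ((1 - X ^ 2) * (1 - X)) * e4 + (X ^ 2 * (1 - X)) * e5 +
    (1 - X ^ 2) * e6 + X ^ 2 * e7 + (1 + X) * e8

open PowerSeries in
theorem genFun_density_five :
    (1 - (X : PowerSeries ℤ) ^ 4) * (1 - X ^ 2) ^ 2 * (1 - X) ^ 2 *
      PowerSeries.mk (fun n => if n = 0 then 0 else (pnwd n 5 : ℤ)) =
      X ^ 5 * (1 + X + X ^ 2) := by
  have hseries : PowerSeries.mk (fun n => if n = 0 then 0 else (pnwd n 5 : ℤ)) =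
      X ^ 5 * tupleSeries gapCondFive := by
    ext n
    rw [coeff_mk, coeff_X_pow_mul', tupleSeries, coeff_mk]
    split_ifs with hn hn5 hn5
    · omega
    · rfl
    · rw [← pnwd_five_eq_tupleCount, Nat.sub_add_cancel hn5]
    · rw [pnwd_eq_zero_of_lt (by omega), Nat.cast_zero]
  rw [hseries, ← one_sub_mul_tupleSeries_gapCondFive]
  ring
end

section
/- The sequence crit(n)/pnw(n) has lim inf equal to 0 as n → ∞; that is, for every ε > 0 and every N there exists n ≥ N with crit(n)/pnw(n) < ε. -/
/-- The number of prefix normal words of length `n`. -/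
noncomputable def pnw (n : ℕ) : ℕ :=
  Nat.card {w : List Bool // w.length = n ∧ IsPrefixNormal w}

/-- The number of extension-critical prefix normal words of length `n`:
prefix normal words `w` such that `w1` is not prefix normal. -/
noncomputable def crit (n : ℕ) : ℕ :=
  Nat.card {w : List Bool // w.length = n ∧ IsPrefixNormal w ∧
    ¬ IsPrefixNormal (w ++ [true])}

/-!
If `crit n ≥ ε · pnw n` for all large `n`, then `pnw (n + 1) ≤ 2 pnw n - crit n` forces
`pnw n = O((2 - ε)ⁿ)`. But `pnw` grows faster than `qⁿ` for every `q < 2`: the word `1^(6r)`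
followed by any `t` blocks of length `2r` with `r` ones each is prefix normal, because the run
of ones dominates the bounded discrepancy of the blocks; hence `pnw (6r + 2rt) ≥ C(2r, r)^t`,
and `C(2r, r)^(1/(2r)) → 2`.
-/

open Filter Asymptotics

lemma count_take_add (l : List Bool) (a b : ℕ) :
    (l.take (a + b)).count true = (l.take a).count true + ((l.drop a).take b).count true := by
  rw [List.take_add, List.count_append]

lemma count_take_le_add_sub (l : List Bool) {a b : ℕ} (hab : a ≤ b) :
    (l.take b).count true ≤ (l.take a).count true + (b - a) := by
  obtain ⟨c, rfl⟩ := Nat.exists_eq_add_of_le hab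
  rw [count_take_add, Nat.add_sub_cancel_left]
  exact Nat.add_le_add_left (List.count_le_length.trans (List.length_take_le _ _)) _

lemma count_take_replicate_append (k ℓ : ℕ) (z : List Bool) :
    ((List.replicate k true ++ z).take ℓ).count true = min ℓ k + (z.take (ℓ - k)).count true := by
  simp [List.take_append, List.take_replicate]

theorem isPrefixNormal_of_count_take_add_le {w : List Bool}
    (h : ∀ a b, a + b ≤ w.length →
      (w.take (a + b)).count true ≤ (w.take a).count true + (w.take b).count true) :
    IsPrefixNormal w := by
  rintro u ⟨s, t, rfl⟩
  have := h s.length u.length (by simp)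
  rw [count_take_add] at this
  simpa using this

theorem IsPrefixNormal.of_prefix {u w : List Bool} (hw : IsPrefixNormal w) (h : u <+: w) :
    IsPrefixNormal u := by
  intro v hv
  obtain ⟨t, rfl⟩ := h
  have := hw v (hv.trans (List.prefix_append u t).isInfix)
  rwa [List.take_append_of_le_length hv.length_le] at this

theorem isPrefixNormal_replicate_false (n : ℕ) : IsPrefixNormal (List.replicate n false) := by
  intro u hu
  simpa [List.count_replicate] using hu.sublist.count_le true

def pnSet (n : ℕ) : Set (List Bool) := {w | w.length = n ∧ IsPrefixNormal w}

lemma pnSet_finite (n : ℕ) : (pnSet n).Finite :=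
  (List.finite_length_eq Bool n).subset fun _ hw ↦ hw.1

lemma pnw_eq_ncard (n : ℕ) : pnw n = (pnSet n).ncard := rfl

lemma crit_eq_ncard (n : ℕ) :
    crit n = (pnSet n \ {w | IsPrefixNormal (w ++ [true])}).ncard := by
  rw [crit, ← Nat.card_coe_set_eq]
  congr 2
  ext w
  simp [pnSet, and_assoc]

lemma pnw_pos (n : ℕ) : 0 < pnw n :=
  (Set.ncard_pos (pnSet_finite n)).2
    ⟨List.replicate n false, List.length_replicate, isPrefixNormal_replicate_false n⟩

lemma pnSet_succ_subset (n : ℕ) :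
    pnSet (n + 1) ⊆ (· ++ [true]) '' (pnSet n ∩ {w | IsPrefixNormal (w ++ [true])}) ∪
      (· ++ [false]) '' pnSet n := by
  rintro w ⟨hlen, hw⟩
  obtain rfl | ⟨v, b, rfl⟩ := w.eq_nil_or_concat'
  · simp at hlen
  have hv : v ∈ pnSet n := ⟨by simpa using hlen, hw.of_prefix (List.prefix_append v [b])⟩
  cases b
  · exact Or.inr ⟨v, hv, rfl⟩
  · exact Or.inl ⟨v, ⟨hv, hw⟩, rfl⟩

/-- A prefix normal word of length `n + 1` is a prefix normal word followed by `0`, or a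
non-critical one followed by `1`. -/
theorem pnw_succ_add_crit_le (n : ℕ) : pnw (n + 1) + crit n ≤ 2 * pnw n := by
  simp only [crit_eq_ncard, pnw_eq_ncard]
  set E := {w | IsPrefixNormal (w ++ [true])}
  have hfin := pnSet_finite n
  have hsplit := Set.ncard_inter_add_ncard_sdiff_eq_ncard (pnSet n) E hfin
  have hsucc : (pnSet (n + 1)).ncard ≤ (pnSet n ∩ E).ncard + (pnSet n).ncard :=
    calc (pnSet (n + 1)).ncard
        ≤ ((· ++ [true]) '' (pnSet n ∩ E) ∪ (· ++ [false]) '' pnSet n).ncard :=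
          Set.ncard_le_ncard (pnSet_succ_subset n)
            (((hfin.inter_of_left E).image _).union (hfin.image _))
      _ ≤ ((· ++ [true]) '' (pnSet n ∩ E)).ncard + ((· ++ [false]) '' pnSet n).ncard :=
          Set.ncard_union_le _ _
      _ ≤ (pnSet n ∩ E).ncard + (pnSet n).ncard :=
          add_le_add (Set.ncard_image_le (hfin.inter_of_left E)) (Set.ncard_image_le hfin)
  omega

def IsBalanced (d : ℕ) (z : List Bool) : Prop :=
  ∀ ℓ ≤ z.length, ℓ ≤ 2 * (z.take ℓ).count true + d ∧ 2 * (z.take ℓ).count true ≤ ℓ + d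

theorem isBalanced_flatten {r : ℕ} {L : List (List Bool)}
    (hL : ∀ B ∈ L, B.length = 2 * r ∧ B.count true = r) : IsBalanced (2 * r) L.flatten := by
  induction L with
  | nil => intro ℓ hℓ; simp_all
  | cons B L ih =>
    obtain ⟨hBlen, hBcount⟩ := hL B List.mem_cons_self
    have ih := ih fun C hC ↦ hL C (List.mem_cons_of_mem B hC)
    intro ℓ hℓ
    rw [List.flatten_cons, List.take_append, List.count_append, hBlen]
    rcases le_or_gt ℓ (2 * r) with h | h
    · have : (B.take ℓ).count true ≤ ℓ :=
        List.count_le_length.trans (List.length_take_le _ _)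
      simp only [Nat.sub_eq_zero_of_le h, List.take_zero, List.count_nil, add_zero]
      omega
    · rw [List.take_of_length_le (by omega), hBcount]
      have := ih (ℓ - 2 * r) (by simp [List.length_flatten] at hℓ ⊢; omega)
      omega

theorem isPrefixNormal_replicate_append {d k : ℕ} {z : List Bool} (hk : 3 * d ≤ k)
    (hz : IsBalanced d z) : IsPrefixNormal (List.replicate k true ++ z) := by
  refine isPrefixNormal_of_count_take_add_le fun a b hab ↦ ?_
  simp only [List.length_append, List.length_replicate] at hab
  simp only [count_take_replicate_append]
  have h₁ := count_take_le_add_sub z (show a - k ≤ a + b - k by omega)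
  have h₂ := count_take_le_add_sub z (show b - k ≤ a + b - k by omega)
  have h₃ := hz (a - k) (by omega)
  have h₄ := hz (b - k) (by omega)
  have h₅ := hz (a + b - k) (by omega)
  -- a window starting inside `z` has at most `b / 2 + d` ones, while the prefix of
  -- length `b > k` has at least `k + (b - k - d) / 2`
  omega

def charWord {n : ℕ} (S : Finset (Fin n)) : List Bool := List.ofFn fun i ↦ decide (i ∈ S)

lemma length_charWord {n : ℕ} (S : Finset (Fin n)) : (charWord S).length = n :=
  List.length_ofFn

lemma count_true_charWord {n : ℕ} (S : Finset (Fin n)) : (charWord S).count true = S.card := by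
  rw [charWord, List.ofFn_eq_map, List.count, List.countP_map, List.countP_eq_length_filter]
  conv_rhs => rw [← Finset.filter_univ_mem S, Finset.card_def, Finset.filter_val, Fin.univ_def]
  simp only [beq_true, Multiset.filter_coe, Multiset.coe_card]
  rfl

lemma charWord_injective (n : ℕ) : Function.Injective (charWord (n := n)) := by
  intro S T h
  ext i
  simpa using congrFun (List.ofFn_injective h) i

theorem List.eq_of_flatten_eq_of_length_eq {α : Type*} {m : ℕ} {L₁ L₂ : List (List α)}
    (h₁ : ∀ B ∈ L₁, B.length = m) (h₂ : ∀ B ∈ L₂, B.length = m)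
    (hlen : L₁.length = L₂.length) (h : L₁.flatten = L₂.flatten) : L₁ = L₂ := by
  induction L₁ generalizing L₂ with
  | nil => exact (List.length_eq_zero_iff.mp hlen.symm).symm
  | cons B L ih =>
    obtain _ | ⟨C, M⟩ := L₂
    · simp at hlen
    obtain ⟨rfl, hLM⟩ := List.append_inj h (by rw [h₁ B (by simp), h₂ C (by simp)])
    rw [ih (fun X hX ↦ h₁ X (by simp [hX])) (fun X hX ↦ h₂ X (by simp [hX]))
      (by simpa using hlen) hLM]

theorem choose_pow_le_pnw (r t : ℕ) : (2 * r).choose r ^ t ≤ pnw (6 * r + 2 * r * t) := by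
  let blocks (f : Fin t → {S : Finset (Fin (2 * r)) // S.card = r}) : List (List Bool) :=
    List.ofFn fun j ↦ charWord (f j).1
  have hblocks : ∀ f, ∀ B ∈ blocks f, B.length = 2 * r ∧ B.count true = r := by
    intro f B hB
    obtain ⟨j, rfl⟩ := List.mem_ofFn.1 hB
    exact ⟨length_charWord _, (count_true_charWord _).trans (f j).2⟩
  let word (f) : pnSet (6 * r + 2 * r * t) :=
    ⟨List.replicate (6 * r) true ++ (blocks f).flatten,
      by simp [blocks, List.length_flatten, Function.comp_def, length_charWord, mul_comm],
      isPrefixNormal_replicate_append (by omega) (isBalanced_flatten (hblocks f))⟩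
  have hword : Function.Injective word := by
    intro f g h
    have hfg := List.eq_of_flatten_eq_of_length_eq (fun B hB ↦ (hblocks f B hB).1)
      (fun B hB ↦ (hblocks g B hB).1) (by simp [blocks])
      (List.append_cancel_left (congrArg Subtype.val h))
    funext j
    exact Subtype.ext (charWord_injective _ (congrFun (List.ofFn_injective hfg) j))
  have := (pnSet_finite (6 * r + 2 * r * t)).to_subtype
  rw [pnw_eq_ncard, ← Nat.card_coe_set_eq]
  calc (2 * r).choose r ^ t = Nat.card (Fin t → {S : Finset (Fin (2 * r)) // S.card = r}) := by
        simp [Fintype.card_finset_len]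
    _ ≤ Nat.card (pnSet (6 * r + 2 * r * t)) := Nat.card_le_card_of_injective word hword

lemma eventually_pow_lt_centralBinom {q : ℝ} (hq₀ : 0 ≤ q) (hq : q < 4) :
    ∀ᶠ r in atTop, q ^ r < Nat.centralBinom r := by
  have hsmall := (tendsto_self_mul_const_pow_of_lt_one (div_nonneg hq₀ zero_le_four)
    ((div_lt_one four_pos).2 hq)).eventually_lt_const one_pos
  filter_upwards [hsmall, eventually_ge_atTop 4] with r hr hr4
  have hcb : (4 : ℝ) ^ r < r * Nat.centralBinom r := by
    exact_mod_cast Nat.four_pow_lt_mul_centralBinom r hr4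
  rw [div_pow, mul_div_assoc', div_lt_one (by positivity)] at hr
  exact lt_of_mul_lt_mul_left (hr.trans hcb) r.cast_nonneg

theorem isBigO_pow_of_succ_le {u : ℕ → ℝ} {q : ℝ} (hq : 0 < q) (hu : ∀ n, 0 ≤ u n) {N : ℕ}
    (h : ∀ n ≥ N, u (n + 1) ≤ q * u n) : u =O[atTop] (q ^ ·) := by
  refine IsBigO.of_bound (u N / q ^ N) ((eventually_ge_atTop N).mono fun n hn ↦ ?_)
  obtain ⟨s, rfl⟩ := Nat.exists_eq_add_of_le hn
  have := le_geom (u := fun s ↦ u (N + s)) hq.le s fun k _ ↦ h (N + k) (by omega)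
  rw [Real.norm_of_nonneg (hu _), norm_pow, Real.norm_of_nonneg hq.le, pow_add]
  calc u (N + s) ≤ q ^ s * u N := this
    _ = u N / q ^ N * (q ^ N * q ^ s) := by field_simp

theorem not_isBigO_pnw_pow {q : ℝ} (hq : |q| < 2) :
    ¬ (fun n ↦ (pnw n : ℝ)) =O[atTop] (q ^ ·) := by
  intro hO
  have hq2 : q ^ 2 < 4 := by nlinarith [abs_nonneg q, sq_abs q]
  obtain ⟨r, hr, hr1⟩ :=
    ((eventually_pow_lt_centralBinom (sq_nonneg q) hq2).and (eventually_ge_atTop 1)).exists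
  set c : ℝ := ((Nat.centralBinom r : ℕ) : ℝ)
  have hn : Tendsto (fun t : ℕ ↦ 6 * r + 2 * r * t) atTop atTop :=
    tendsto_atTop_mono (fun t ↦ show t ≤ _ by nlinarith) tendsto_id
  have hlower : (fun t : ℕ ↦ c ^ t) =O[atTop] fun t ↦ (pnw (6 * r + 2 * r * t) : ℝ) :=
    IsBigO.of_bound 1 (Eventually.of_forall fun t ↦ by
      simp only [c, Nat.centralBinom, norm_pow, Real.norm_natCast, one_mul]
      exact_mod_cast choose_pow_le_pnw r t)
  have hupper : (fun t : ℕ ↦ q ^ (6 * r + 2 * r * t)) =O[atTop] fun t ↦ ((q ^ 2) ^ r) ^ t := by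
    simp_rw [pow_add, ← pow_mul]
    exact (isBigO_refl _ _).const_mul_left _
  have hsmall := isLittleO_pow_pow_of_lt_left (by positivity) hr
  exact isLittleO_irrefl (Frequently.of_forall fun t ↦
    pow_ne_zero t (Nat.cast_ne_zero.2 (Nat.centralBinom_ne_zero r)))
    (hlower.trans_isLittleO ((hO.comp_tendsto hn).trans_isLittleO (hupper.trans_isLittleO hsmall)))

theorem liminf_crit_ratio_zero :
    ∀ ε : ℝ, 0 < ε → ∀ N : ℕ, ∃ n : ℕ, N ≤ n ∧ (crit n : ℝ) / (pnw n : ℝ) < ε := by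
  intro ε hε N
  by_contra! h
  set δ := min ε 1
  have hstep : ∀ n ≥ N, (pnw (n + 1) : ℝ) ≤ (2 - δ) * pnw n := by
    intro n hn
    have hcrit : ε * pnw n ≤ crit n := (le_div_iff₀ (by exact_mod_cast pnw_pos n)).mp (h n hn)
    have hrec : (pnw (n + 1) : ℝ) + crit n ≤ 2 * pnw n := by exact_mod_cast pnw_succ_add_crit_le n
    nlinarith [min_le_left ε 1, (pnw n).cast_nonneg (α := ℝ)]
  have hδ : 0 < δ ∧ δ ≤ 1 := ⟨lt_min hε one_pos, min_le_right ε 1⟩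
  exact not_isBigO_pnw_pow (abs_lt.2 ⟨by linarith, by linarith⟩)
    (isBigO_pow_of_succ_le (by linarith) (fun n ↦ (pnw n).cast_nonneg) hstep)
end
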